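/- arXiv:1801.07155 — 4 statements merged into one kernel-verified Lean document; each statement's English description precedes it below -/
import Mathlib

section
/- (Replacement difference) Let μ_1 and μ_2 each be either a nonempty sequence of positive integers or the sequence 0,0. Then N[μ_1,1,1,μ_2] − N[μ_1,2,μ_2] = N[μ_1^-]·N[^-μ_2], where μ_1^- is μ_1 with its last entry removed and ^-μ_2 is μ_2 with its first entry removed (and N of the empty sequence is 1). -/
/-- head-recursion continuant -/
def contAux : List ℕ → ℕ
  | [] => 1
  | [a] => a
  | a :: b :: l => a * contAux (b :: l) + contAux l

/-- continuant `N[a₁,...,aₙ]`, satisfying `N[] = 1`, `N[a] = a`,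
`N[a₁,...,aₙ] = aₙ·N[a₁,...,aₙ₋₁] + N[a₁,...,aₙ₋₂]`. -/
def contN (l : List ℕ) : ℕ := contAux l.reverse


/-- μ is either a nonempty sequence of positive integers or the sequence 0,0 -/
def OkSeq (μ : List ℕ) : Prop := (μ ≠ [] ∧ ∀ x ∈ μ, 0 < x) ∨ μ = [0, 0]

/-! Splitting at μ₁ with `N[A,B] = N[A]·N[B] + N[A⁻]·N[⁻B]` gives
`N[μ₁,1,1,μ₂] = N[μ₁]·N[1,1,μ₂] + N[μ₁⁻]·N[1,μ₂]` and
`N[μ₁,2,μ₂] = N[μ₁]·N[2,μ₂] + N[μ₁⁻]·N[μ₂]`. Since `N[1,1,μ₂] = N[2,μ₂]` and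
`N[1,μ₂] = N[μ₂] + N[⁻μ₂]`, the difference is `N[μ₁⁻]·N[⁻μ₂]`. -/

lemma contAux_cons (a : ℕ) {B : List ℕ} (hB : B ≠ []) :
    contAux (a :: B) = a * contAux B + contAux B.tail := by
  obtain ⟨b, B, rfl⟩ := List.exists_cons_of_ne_nil hB
  rfl

lemma contAux_append {A B : List ℕ} (hA : A ≠ []) (hB : B ≠ []) :
    contAux (A ++ B) = contAux A * contAux B + contAux A.dropLast * contAux B.tail := by
  induction A using contAux.induct with
  | case1 => contradiction
  | case2 a => simp [contAux_cons a hB, contAux]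
  | case3 a b l ih₁ ih₂ =>
    rcases eq_or_ne l [] with rfl | hl
    · simp only [List.cons_append, List.nil_append, contAux, contAux_cons b hB,
        List.dropLast_cons_cons, List.dropLast_singleton]
      ring
    · have hsplit : contAux (a :: b :: l ++ B) = a * contAux (b :: l ++ B) + contAux (l ++ B) :=
        contAux_cons a (List.cons_ne_nil _ _)
      have hunfold : contAux (a :: b :: l) = a * contAux (b :: l) + contAux l := rfl
      have hdrop : contAux (a :: b :: l).dropLast =
          a * contAux (b :: l).dropLast + contAux l.dropLast := by
        rw [List.dropLast_cons_of_ne_nil (List.cons_ne_nil _ _), List.dropLast_cons_of_ne_nil hl]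
        rfl
      rw [hsplit, ih₁ (List.cons_ne_nil _ _), ih₂ hl, hunfold, hdrop]
      ring

lemma contN_append {A B : List ℕ} (hA : A ≠ []) (hB : B ≠ []) :
    contN (A ++ B) = contN A * contN B + contN A.dropLast * contN B.tail := by
  rw [contN, List.reverse_append, contAux_append (List.reverse_ne_nil_iff.2 hB)
    (List.reverse_ne_nil_iff.2 hA), List.dropLast_reverse, List.tail_reverse]
  simp only [contN]
  ring

lemma contN_cons (a : ℕ) {B : List ℕ} (hB : B ≠ []) :
    contN (a :: B) = a * contN B + contN B.tail := by
  simpa [contN, contAux] using contN_append (List.cons_ne_nil a []) hB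

lemma contN_one_one_cons {B : List ℕ} (hB : B ≠ []) : contN (1 :: 1 :: B) = contN (2 :: B) := by
  rw [contN_cons 1 (List.cons_ne_nil _ _), List.tail_cons, contN_cons 1 hB, contN_cons 2 hB]
  ring

lemma OkSeq.ne_nil {μ : List ℕ} (h : OkSeq μ) : μ ≠ [] := by
  rcases h with ⟨hne, -⟩ | rfl
  exacts [hne, List.cons_ne_nil _ _]

theorem stmt_10 (μ₁ μ₂ : List ℕ) (h₁ : OkSeq μ₁) (h₂ : OkSeq μ₂) :
    contN (μ₁ ++ [1, 1] ++ μ₂) =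
      contN (μ₁ ++ [2] ++ μ₂) + contN μ₁.dropLast * contN μ₂.tail := by
  simp only [List.append_assoc, List.cons_append, List.nil_append]
  rw [contN_append h₁.ne_nil (List.cons_ne_nil _ _), contN_append h₁.ne_nil (List.cons_ne_nil _ _),
    List.tail_cons, List.tail_cons, contN_one_one_cons h₂.ne_nil, contN_cons 1 h₂.ne_nil]
  ring
end

section
/- (Base case of the 2-versus-1,1 positivity) Let μ_1 and μ_2 each be either a nonempty sequence of positive integers or the sequence 0,0. Then N[μ_1,2,μ_2,2] > N[μ_1,1,1,μ_2]. -/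
/-! Write `p = N[μ₁]`, `q = N[μ₁⁻]` (last entry dropped), `α = N[μ₂]` and
`β = N[⁻μ₂]` (first entry dropped). Splitting at the junction, Euler's rule
`N[x, y] = N[x] N[y] + N[x⁻] N[⁻y]` gives `N[μ₁,2,μ₂] = (2p+q)α + pβ` and, since
`N[μ₁,1,1] = N[μ₁,2]` and `N[μ₁,1] = p + q`, `N[μ₁,1,1,μ₂] = N[μ₁,2,μ₂] + qβ`.
As `q ≤ p` and `(2p+q)α > 0`, this is less than `2 N[μ₁,2,μ₂] ≤ N[μ₁,2,μ₂,2]`. -/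

theorem contAux_cons_of_ne_nil (a : ℕ) {l : List ℕ} (hl : l ≠ []) :
    contAux (a :: l) = a * contAux l + contAux l.tail := by
  obtain ⟨b, t, rfl⟩ := List.exists_cons_of_ne_nil hl
  rfl

theorem contAux_append_s12 {x y : List ℕ} (hx : x ≠ []) (hy : y ≠ []) :
    contAux (x ++ y) = contAux x * contAux y + contAux x.dropLast * contAux y.tail := by
  induction x using contAux.induct with
  | case1 => exact absurd rfl hx
  | case2 a => simp [contAux_cons_of_ne_nil a hy, contAux]
  | case3 a b l ih₁ ih₂ =>
    change a * contAux (b :: l ++ y) + contAux (l ++ y) = _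
    rw [ih₁ (List.cons_ne_nil b l), List.dropLast_cons_cons]
    rcases eq_or_ne l [] with rfl | hl
    · simp only [List.nil_append, List.dropLast_singleton, contAux]
      ring
    · rw [ih₂ hl, List.dropLast_cons_of_ne_nil hl, contAux_cons_of_ne_nil a (List.cons_ne_nil b l),
        contAux_cons_of_ne_nil a (by simp), contAux_cons_of_ne_nil b hl]
      simp only [List.tail_cons]
      ring

theorem contAux_pos {l : List ℕ} (h : ∀ x ∈ l, 0 < x) : 0 < contAux l := by
  induction l using contAux.induct with
  | case1 => exact Nat.one_pos
  | case2 a => exact h a (List.mem_singleton_self a)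
  | case3 a b l ih₁ _ =>
    have hb : 0 < contAux (b :: l) := ih₁ fun x hx => h x (List.mem_cons_of_mem a hx)
    have ha : 0 < a := h a List.mem_cons_self
    change 0 < a * contAux (b :: l) + contAux l
    positivity

theorem contAux_tail_le {l : List ℕ} (h : ∀ x ∈ l, 0 < x) : contAux l.tail ≤ contAux l := by
  match l, h with
  | [], _ => exact le_rfl
  | [a], h => exact h a (List.mem_singleton_self a)
  | a :: b :: t, h =>
    have ha : 1 ≤ a := h a List.mem_cons_self
    change contAux (b :: t) ≤ a * contAux (b :: t) + contAux t
    nlinarith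

theorem contN_append_s12 {x y : List ℕ} (hx : x ≠ []) (hy : y ≠ []) :
    contN (x ++ y) = contN x * contN y + contN x.dropLast * contN y.tail := by
  rw [contN, List.reverse_append,
    contAux_append_s12 (List.reverse_ne_nil_iff.mpr hy) (List.reverse_ne_nil_iff.mpr hx),
    List.dropLast_reverse, List.tail_reverse, contN, contN, contN, contN]
  ring

theorem contN_append_singleton {x : List ℕ} (hx : x ≠ []) (a : ℕ) :
    contN (x ++ [a]) = a * contN x + contN x.dropLast := by
  rw [contN_append_s12 hx (List.cons_ne_nil a []), List.tail_cons]
  change contN x * a + contN x.dropLast * 1 = _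
  ring

theorem contN_append_one_one {x : List ℕ} (hx : x ≠ []) :
    contN (x ++ [1, 1]) = contN (x ++ [2]) := by
  rw [← List.singleton_append, ← List.append_assoc, contN_append_singleton (by simp),
    List.dropLast_concat, contN_append_singleton hx, contN_append_singleton hx]
  ring

theorem contN_pos {l : List ℕ} (h : ∀ x ∈ l, 0 < x) : 0 < contN l :=
  contAux_pos fun x hx => h x (List.mem_reverse.mp hx)

theorem contN_dropLast_le {l : List ℕ} (h : ∀ x ∈ l, 0 < x) : contN l.dropLast ≤ contN l := by
  rw [contN, ← List.tail_reverse]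
  exact contAux_tail_le fun x hx => h x (List.mem_reverse.mp hx)

namespace OkSeq

variable {μ : List ℕ}

theorem ne_nil_s12 (h : OkSeq μ) : μ ≠ [] := by
  rcases h with ⟨hne, _⟩ | rfl
  · exact hne
  · exact List.cons_ne_nil 0 [0]

theorem contN_pos (h : OkSeq μ) : 0 < contN μ := by
  rcases h with ⟨_, hpos⟩ | rfl
  · exact _root_.contN_pos hpos
  · decide

theorem contN_dropLast_le (h : OkSeq μ) : contN μ.dropLast ≤ contN μ := by
  rcases h with ⟨_, hpos⟩ | rfl
  · exact _root_.contN_dropLast_le hpos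
  · decide

end OkSeq

theorem stmt_12 (μ₁ μ₂ : List ℕ) (h₁ : OkSeq μ₁) (h₂ : OkSeq μ₂) :
    contN (μ₁ ++ [2] ++ μ₂ ++ [2]) > contN (μ₁ ++ [1, 1] ++ μ₂) := by
  have hne₁ := h₁.ne_nil_s12
  have hne₂ := h₂.ne_nil_s12
  have hmid : contN (μ₁ ++ [2] ++ μ₂) =
      contN (μ₁ ++ [2]) * contN μ₂ + contN μ₁ * contN μ₂.tail := by
    rw [contN_append_s12 (by simp) hne₂, List.dropLast_concat]
  have hswap : contN (μ₁ ++ [1, 1] ++ μ₂) =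
      contN (μ₁ ++ [2] ++ μ₂) + contN μ₁.dropLast * contN μ₂.tail := by
    have hdrop : (μ₁ ++ [1, 1]).dropLast = μ₁ ++ [1] := by simp
    rw [hmid, contN_append_s12 (by simp) hne₂, contN_append_one_one hne₁, hdrop,
      contN_append_singleton hne₁ 1]
    ring
  have hlead : 0 < contN (μ₁ ++ [2]) * contN μ₂ := by
    have := h₁.contN_pos
    have := h₂.contN_pos
    rw [contN_append_singleton hne₁]
    positivity
  calc contN (μ₁ ++ [1, 1] ++ μ₂)
      < 2 * contN (μ₁ ++ [2] ++ μ₂) := by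
        have := Nat.mul_le_mul_right (contN μ₂.tail) h₁.contN_dropLast_le
        omega
    _ ≤ contN (μ₁ ++ [2] ++ μ₂ ++ [2]) := by
        rw [contN_append_singleton (by simp)]
        omega
end

section
/- For k a positive integer with k ≠ 1 and k ≠ 3, the Diophantine equation x² + y² + z² = kxyz has no solution in positive integers. -/
/-!
For `k ≥ 5` there is a descent: with `x` the largest coordinate, the other root `k y z - x` of
`X² - k y z X + (y² + z²)` is positive and smaller than `x`, because `x² ≤ y² + z²` would give
`k y z ≤ 2 (y + z)`. For even `k`, reducing mod 4 shows that all coordinates are even, and halving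
them gives a solution for `2 k`; so `k = 2` and `k = 4` lead to `k = 8`.
-/

theorem even_of_sq_add_sq_add_sq_eq {k x y z : ℕ} (hk : Even k)
    (h : x ^ 2 + y ^ 2 + z ^ 2 = k * x * y * z) : Even x ∧ Even y ∧ Even z := by
  obtain ⟨m, rfl⟩ := hk
  have mod_four : ∀ a b c d : ZMod 4, a ^ 2 + b ^ 2 + c ^ 2 = (d + d) * a * b * c →
      2 * a = 0 ∧ 2 * b = 0 ∧ 2 * c = 0 := by
    decide
  have even_of_two_mul : ∀ n : ℕ, 2 * (n : ZMod 4) = 0 → Even n := fun n hn => by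
    have := (ZMod.natCast_eq_zero_iff (2 * n) 4).mp (by push_cast; exact hn)
    rw [Nat.even_iff]
    omega
  obtain ⟨hx, hy, hz⟩ := mod_four x y z m (by exact_mod_cast congrArg (Nat.cast : ℕ → ZMod 4) h)
  exact ⟨even_of_two_mul x hx, even_of_two_mul y hy, even_of_two_mul z hz⟩

structure IsMarkovTriple (k x y z : ℕ) : Prop where
  x_pos : 0 < x
  y_pos : 0 < y
  z_pos : 0 < z
  eq : x ^ 2 + y ^ 2 + z ^ 2 = k * x * y * z

namespace IsMarkovTriple

variable {k x y z : ℕ}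

theorem swap_xy (h : IsMarkovTriple k x y z) : IsMarkovTriple k y x z :=
  ⟨h.y_pos, h.x_pos, h.z_pos, by linarith [h.eq]⟩

theorem swap_xz (h : IsMarkovTriple k x y z) : IsMarkovTriple k z y x :=
  ⟨h.z_pos, h.y_pos, h.x_pos, by linarith [h.eq]⟩

theorem k_pos (h : IsMarkovTriple k x y z) : 0 < k := by
  obtain ⟨hx, -, -, h⟩ := h
  refine Nat.pos_of_ne_zero fun hk => ?_
  rw [hk] at h
  nlinarith

theorem exists_lt_of_le (hk : 5 ≤ k) (h : IsMarkovTriple k x y z) (hyx : y ≤ x) (hzx : z ≤ x) :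
    ∃ w < x, IsMarkovTriple k w y z := by
  obtain ⟨hx, hy, hz, h⟩ := h
  have hlt : x < k * y * z := by nlinarith
  obtain ⟨w, hw⟩ : ∃ w, w + x = k * y * z := ⟨_, Nat.sub_add_cancel hlt.le⟩
  have hwx : w * x = y ^ 2 + z ^ 2 := by nlinarith
  have hw_eq : w ^ 2 + y ^ 2 + z ^ 2 = k * w * y * z := by nlinarith
  have hw_pos : 0 < w := Nat.pos_of_ne_zero fun hw0 => by rw [hw0, zero_mul] at hwx; nlinarith
  refine ⟨w, ?_, hw_pos, hy, hz, hw_eq⟩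
  by_contra! hxw
  have hx_sq : x ^ 2 ≤ y ^ 2 + z ^ 2 := by nlinarith [Nat.mul_le_mul_right x hxw]
  have hupper : k * y * z * x ≤ 2 * (y + z) * x := by
    nlinarith [Nat.mul_le_mul_right y hyx, Nat.mul_le_mul_right z hzx]
  have hlower : 2 * (y + z) < k * y * z := by
    nlinarith [Nat.mul_le_mul_right (y * z) hk, Nat.mul_le_mul_left y hz, Nat.mul_le_mul_right z hy]
  exact absurd (Nat.le_of_mul_le_mul_right hupper hx) hlower.not_ge

theorem exists_sum_lt (hk : 5 ≤ k) (h : IsMarkovTriple k x y z) :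
    ∃ a b c, IsMarkovTriple k a b c ∧ a + b + c < x + y + z := by
  wlog hzx : z ≤ x generalizing x z
  · obtain ⟨a, b, c, h', hlt⟩ := this h.swap_xz (by omega)
    exact ⟨a, b, c, h', by omega⟩
  wlog hyx : y ≤ x generalizing x y
  · obtain ⟨a, b, c, h', hlt⟩ := this h.swap_xy (by omega) (by omega)
    exact ⟨a, b, c, h', by omega⟩
  obtain ⟨w, hwx, hw⟩ := h.exists_lt_of_le hk hyx hzx
  exact ⟨w, y, z, hw, by omega⟩

theorem lt_five (h : IsMarkovTriple k x y z) : k < 5 := by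
  by_contra! hk
  induction hn : x + y + z using Nat.strong_induction_on generalizing x y z with
  | _ n ih =>
    obtain ⟨a, b, c, h', hlt⟩ := h.exists_sum_lt hk
    exact ih _ (hn ▸ hlt) h' rfl

theorem half (h : IsMarkovTriple k x y z) (hk : Even k) :
    IsMarkovTriple (2 * k) (x / 2) (y / 2) (z / 2) := by
  obtain ⟨⟨a, rfl⟩, ⟨b, rfl⟩, ⟨c, rfl⟩⟩ := even_of_sq_add_sq_add_sq_eq hk h.eq
  obtain ⟨hx, hy, hz, h⟩ := h
  simp only [← two_mul, Nat.mul_div_cancel_left _ two_pos] at *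
  refine ⟨by omega, by omega, by omega, Nat.eq_of_mul_eq_mul_left four_pos ?_⟩
  linear_combination h

theorem eq_one_or_eq_three (h : IsMarkovTriple k x y z) : k = 1 ∨ k = 3 := by
  have := h.k_pos
  have := h.lt_five
  interval_cases k
  · exact .inl rfl
  · exact absurd ((h.half even_two).half (by decide)).lt_five (by norm_num)
  · exact .inr rfl
  · exact absurd (h.half (by decide)).lt_five (by norm_num)

end IsMarkovTriple

theorem stmt_18_general (k : ℕ) (h1 : k ≠ 1) (h3 : k ≠ 3) :
    ¬ ∃ x y z : ℕ, 0 < x ∧ 0 < y ∧ 0 < z ∧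
      x ^ 2 + y ^ 2 + z ^ 2 = k * x * y * z := by
  rintro ⟨x, y, z, hx, hy, hz, h⟩
  rcases IsMarkovTriple.eq_one_or_eq_three ⟨hx, hy, hz, h⟩ with rfl | rfl <;> contradiction

theorem stmt_18 (k : ℕ) (hk : 0 < k) (h1 : k ≠ 1) (h3 : k ≠ 3) :
    ¬ ∃ x y z : ℕ, 0 < x ∧ 0 < y ∧ 0 < z ∧
      x ^ 2 + y ^ 2 + z ^ 2 = k * x * y * z :=
  stmt_18_general k h1 h3
end

section
/- If (x,y,z) is a positive integer solution of x² + y² + z² = xyz, then each of x, y, z is divisible by 3, and (x/3, y/3, z/3) is a solution of the Markov equation a² + b² + c² = 3abc. -/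
/-! Modulo 3 every nonzero square is 1, so a sum of three squares vanishes only if either all
or none of the terms do; in the second case the product is nonzero. Hence `x² + y² + z² = xyz`
forces `x ≡ y ≡ z ≡ 0 (mod 3)`, and dividing the equation by 9 gives the Markov equation. -/

theorem ZMod.eq_zero_of_sq_add_sq_add_sq_eq_mul (a b c : ZMod 3)
    (h : a ^ 2 + b ^ 2 + c ^ 2 = a * b * c) : a = 0 ∧ b = 0 ∧ c = 0 := by
  revert a b c
  decide

theorem Int.three_dvd_of_sq_add_sq_add_sq_eq_mul {x y z : ℤ}
    (h : x ^ 2 + y ^ 2 + z ^ 2 = x * y * z) : 3 ∣ x ∧ 3 ∣ y ∧ 3 ∣ z := by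
  have hmod : (x : ZMod 3) ^ 2 + (y : ZMod 3) ^ 2 + (z : ZMod 3) ^ 2 = x * y * z := by
    exact_mod_cast congrArg (Int.cast : ℤ → ZMod 3) h
  simpa only [ZMod.intCast_zmod_eq_zero_iff_dvd, Nat.cast_ofNat]
    using ZMod.eq_zero_of_sq_add_sq_add_sq_eq_mul _ _ _ hmod

theorem Nat.sq_add_sq_add_sq_eq_mul_three_mul_iff (a b c : ℕ) :
    (3 * a) ^ 2 + (3 * b) ^ 2 + (3 * c) ^ 2 = 3 * a * (3 * b) * (3 * c) ↔
      a ^ 2 + b ^ 2 + c ^ 2 = 3 * a * b * c := by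
  constructor <;> intro h
  · have h9 : 9 * (a ^ 2 + b ^ 2 + c ^ 2) = 9 * (3 * a * b * c) := by linarith
    omega
  · linarith

theorem stmt_19_general (x y z : ℕ)
    (h : x ^ 2 + y ^ 2 + z ^ 2 = x * y * z) :
    3 ∣ x ∧ 3 ∣ y ∧ 3 ∣ z ∧
    (x / 3) ^ 2 + (y / 3) ^ 2 + (z / 3) ^ 2 =
      3 * (x / 3) * (y / 3) * (z / 3) := by
  have hInt : (x : ℤ) ^ 2 + (y : ℤ) ^ 2 + (z : ℤ) ^ 2 = x * y * z := by exact_mod_cast h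
  have hdvd := Int.three_dvd_of_sq_add_sq_add_sq_eq_mul hInt
  norm_cast at hdvd
  obtain ⟨⟨a, rfl⟩, ⟨b, rfl⟩, ⟨c, rfl⟩⟩ := hdvd
  simp only [Nat.mul_div_cancel_left _ three_pos, dvd_mul_right, true_and]
  exact (Nat.sq_add_sq_add_sq_eq_mul_three_mul_iff a b c).mp h

theorem stmt_19 (x y z : ℕ) (hx : 0 < x) (hy : 0 < y) (hz : 0 < z)
    (h : x ^ 2 + y ^ 2 + z ^ 2 = x * y * z) :
    3 ∣ x ∧ 3 ∣ y ∧ 3 ∣ z ∧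
    (x / 3) ^ 2 + (y / 3) ^ 2 + (z / 3) ^ 2 =
      3 * (x / 3) * (y / 3) * (z / 3) :=
  stmt_19_general x y z h
end
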